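/- arXiv:2602.02021 — 6 statements merged into one kernel-verified Lean document; each statement's English description precedes it below -/
import Mathlib

section
/- For every λ∈ℂ∖{0}, η,θ∈ℂ and polynomials α(h̄),β(h̄)∈ℂ[h̄] for which the Ω-formulas with a=0 define a 𝔤-module structure, the subspace h̄·ℂ[h,h̄]⊗L(η,θ) (the span of all elements h̄γ(h,h̄)⊗w) is a nonzero proper 𝔤-submodule of Ω(λ,0,β(h̄))⊗L(η,θ); in particular this tensor product module is reducible. -/
open scoped TensorProduct

noncomputable section

/-- The polynomial ring `ℂ[h, h̄]`, with `X 0 = h` and `X 1 = h̄`. -/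
abbrev P2 : Type := MvPolynomial (Fin 2) ℂ

namespace Tk

/-- The variable `h`. -/
def hh : P2 := MvPolynomial.X 0

/-- The variable `h̄`. -/
def hbar : P2 := MvPolynomial.X 1

/-- Constant polynomials. -/
def Cc (c : ℂ) : P2 := MvPolynomial.C c

/-- Substitution `h ↦ h + c`, i.e. `sh c γ = γ(h + c, h̄)`. -/
def sh (c : ℂ) (γ : P2) : P2 := MvPolynomial.aeval ![hh + Cc c, hbar] γ

/-- The partial derivative `∂/∂h̄`. -/
def pd (γ : P2) : P2 := MvPolynomial.pderiv (1 : Fin 2) γ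

/-- The embedding `ℂ[h̄] → ℂ[h,h̄]`, `q(X) ↦ q(h̄)`. -/
def emb (q : Polynomial ℂ) : P2 := Polynomial.aeval hbar q

/-- The data exhibiting a complex Lie algebra `g` as the Takiff Lie algebra of `sl₂`:
a basis `e, f, h, ē, f̄, h̄` (denoted `E F H E' F' H'`) subject to the Takiff bracket
relations. -/
structure TakiffData (g : Type) [LieRing g] [LieAlgebra ℂ g] where
  E : g
  F : g
  H : g
  E' : g
  F' : g
  H' : g
  bas : Module.Basis (Fin 6) ℂ g
  hbas : ⇑bas = ![E, F, H, E', F', H']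
  rEF : ⁅E, F⁆ = H
  rHE : ⁅H, E⁆ = (2 : ℂ) • E
  rHF : ⁅H, F⁆ = (-2 : ℂ) • F
  rE'F : ⁅E', F⁆ = H'
  rEF' : ⁅E, F'⁆ = H'
  rHE' : ⁅H, E'⁆ = (2 : ℂ) • E'
  rH'E : ⁅H', E⁆ = (2 : ℂ) • E'
  rHF' : ⁅H, F'⁆ = (-2 : ℂ) • F'
  rH'F : ⁅H', F⁆ = (-2 : ℂ) • F'
  rHH' : ⁅H, H'⁆ = 0
  rEE' : ⁅E, E'⁆ = 0
  rFF' : ⁅F, F'⁆ = 0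
  rE'F' : ⁅E', F'⁆ = 0
  rE'H' : ⁅E', H'⁆ = 0
  rF'H' : ⁅F', H'⁆ = 0

variable {g : Type} [LieRing g] [LieAlgebra ℂ g]

/-- The Lie module structure on `ℂ[h,h̄]` is that of `Γ(λ, a, b)`. -/
def GammaAct (T : TakiffData g) (l a b : ℂ) [LieRingModule g P2] : Prop :=
  (∀ γ : P2, ⁅T.E, γ⁆ = Cc (-2 * l) * pd (sh (-2) γ)) ∧
  (∀ γ : P2, ⁅T.E', γ⁆ = Cc l * sh (-2) γ) ∧
  (∀ γ : P2, ⁅T.F, γ⁆ =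
      -(Cc (1 / (2 * l)) * ((hh + Cc 2) * hbar + Cc b) * sh 2 γ)
        - Cc (1 / (2 * l)) * (hbar ^ 2 + Cc a) * pd (sh 2 γ)) ∧
  (∀ γ : P2, ⁅T.F', γ⁆ = -(Cc (1 / (4 * l)) * (hbar ^ 2 + Cc a) * sh 2 γ)) ∧
  (∀ γ : P2, ⁅T.H, γ⁆ = hh * γ) ∧
  (∀ γ : P2, ⁅T.H', γ⁆ = hbar * γ)

/-- The Lie module structure on `ℂ[h,h̄]` is that of `Θ(λ, a, b)`. -/
def ThetaAct (T : TakiffData g) (l a b : ℂ) [LieRingModule g P2] : Prop :=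
  (∀ γ : P2, ⁅T.F, γ⁆ = Cc (2 * l) * pd (sh 2 γ)) ∧
  (∀ γ : P2, ⁅T.F', γ⁆ = Cc l * sh 2 γ) ∧
  (∀ γ : P2, ⁅T.E', γ⁆ = -(Cc (1 / (4 * l)) * (hbar ^ 2 + Cc a) * sh (-2) γ)) ∧
  (∀ γ : P2, ⁅T.E, γ⁆ =
      -(Cc (1 / (2 * l)) * ((hh - Cc 2) * hbar + Cc b) * sh (-2) γ)
        + Cc (1 / (2 * l)) * (hbar ^ 2 + Cc a) * pd (sh (-2) γ)) ∧
  (∀ γ : P2, ⁅T.H, γ⁆ = hh * γ) ∧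
  (∀ γ : P2, ⁅T.H', γ⁆ = hbar * γ)

/-- The Lie module structure on `ℂ[h,h̄]` is that of `Ω(λ, a, β(h̄))` (with auxiliary
polynomial `α(h̄)`). -/
def OmegaAct (T : TakiffData g) (l a : ℂ) (α β : Polynomial ℂ) [LieRingModule g P2] : Prop :=
  (∀ γ : P2, ⁅T.E, γ⁆ =
      (Cc (l / 2) * hh + emb α) * sh (-2) γ - Cc l * (hbar + Cc a) * pd (sh (-2) γ)) ∧
  (∀ γ : P2, ⁅T.F, γ⁆ =
      -((Cc (1 / (2 * l)) * hh - emb β) * sh 2 γ) - Cc (1 / l) * (hbar - Cc a) * pd (sh 2 γ)) ∧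
  (∀ γ : P2, ⁅T.E', γ⁆ = Cc (l / 2) * (hbar + Cc a) * sh (-2) γ) ∧
  (∀ γ : P2, ⁅T.F', γ⁆ = -(Cc (1 / (2 * l)) * (hbar - Cc a) * sh 2 γ)) ∧
  (∀ γ : P2, ⁅T.H, γ⁆ = hh * γ) ∧
  (∀ γ : P2, ⁅T.H', γ⁆ = hbar * γ)

/-- `v` is a highest weight vector of highest weight `(η, θ)`. -/
def IsHW (T : TakiffData g) (η θ : ℂ) {L : Type} [AddCommGroup L] [Module ℂ L]
    [LieRingModule g L] (v : L) : Prop :=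
  v ≠ 0 ∧ ⁅T.E, v⁆ = 0 ∧ ⁅T.E', v⁆ = 0 ∧ ⁅T.H, v⁆ = θ • v ∧ ⁅T.H', v⁆ = η • v

/-- `M`, with distinguished vector `vb`, is the Verma module `L̄(η, θ)`: `vb` is a
highest weight vector of weight `(η, θ)` generating `M`, and `M` enjoys the corresponding
universal property. -/
def IsVerma (T : TakiffData g) (η θ : ℂ) {M : Type} [AddCommGroup M] [Module ℂ M]
    [LieRingModule g M] [LieModule ℂ g M] (vb : M) : Prop :=
  ⁅T.E, vb⁆ = 0 ∧ ⁅T.E', vb⁆ = 0 ∧ ⁅T.H, vb⁆ = θ • vb ∧ ⁅T.H', vb⁆ = η • vb ∧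
  LieSubmodule.lieSpan ℂ g {vb} = ⊤ ∧
  ∀ (N : Type) [AddCommGroup N] [Module ℂ N] [LieRingModule g N] [LieModule ℂ g N]
    (w : N), ⁅T.E, w⁆ = 0 → ⁅T.E', w⁆ = 0 → ⁅T.H, w⁆ = θ • w → ⁅T.H', w⁆ = η • w →
      ∃ φ : M →ₗ⁅ℂ,g⁆ N, φ vb = w

/-- `f^i • f̄^j • vb`. -/
def ff (T : TakiffData g) {M : Type} [AddCommGroup M] [Module ℂ M] [LieRingModule g M]
    (vb : M) (i j : ℕ) : M :=
  (fun z : M => ⁅T.F, z⁆)^[i] ((fun z : M => ⁅T.F', z⁆)^[j] vb)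

end Tk

namespace Tk

variable {g : Type} [LieRing g] [LieAlgebra ℂ g]

/-- The Lie module `V`, identified with `ℂ[h,h̄]` via the linear equivalence `ι`, is a copy of
`Γ(λ, a, b)`. -/
def GammaActOn (T : TakiffData g) (l a b : ℂ) {V : Type} [AddCommGroup V] [Module ℂ V]
    [LieRingModule g V] (ι : V ≃ₗ[ℂ] P2) : Prop :=
  (∀ v : V, ι ⁅T.E, v⁆ = Cc (-2 * l) * pd (sh (-2) (ι v))) ∧
  (∀ v : V, ι ⁅T.E', v⁆ = Cc l * sh (-2) (ι v)) ∧
  (∀ v : V, ι ⁅T.F, v⁆ =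
      -(Cc (1 / (2 * l)) * ((hh + Cc 2) * hbar + Cc b) * sh 2 (ι v))
        - Cc (1 / (2 * l)) * (hbar ^ 2 + Cc a) * pd (sh 2 (ι v))) ∧
  (∀ v : V, ι ⁅T.F', v⁆ = -(Cc (1 / (4 * l)) * (hbar ^ 2 + Cc a) * sh 2 (ι v))) ∧
  (∀ v : V, ι ⁅T.H, v⁆ = hh * ι v) ∧
  (∀ v : V, ι ⁅T.H', v⁆ = hbar * ι v)

/-- The Lie module `V`, identified with `ℂ[h,h̄]` via the linear equivalence `ι`, is a copy of
`Θ(λ, a, b)`. -/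
def ThetaActOn (T : TakiffData g) (l a b : ℂ) {V : Type} [AddCommGroup V] [Module ℂ V]
    [LieRingModule g V] (ι : V ≃ₗ[ℂ] P2) : Prop :=
  (∀ v : V, ι ⁅T.F, v⁆ = Cc (2 * l) * pd (sh 2 (ι v))) ∧
  (∀ v : V, ι ⁅T.F', v⁆ = Cc l * sh 2 (ι v)) ∧
  (∀ v : V, ι ⁅T.E', v⁆ = -(Cc (1 / (4 * l)) * (hbar ^ 2 + Cc a) * sh (-2) (ι v))) ∧
  (∀ v : V, ι ⁅T.E, v⁆ =
      -(Cc (1 / (2 * l)) * ((hh - Cc 2) * hbar + Cc b) * sh (-2) (ι v))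
        + Cc (1 / (2 * l)) * (hbar ^ 2 + Cc a) * pd (sh (-2) (ι v))) ∧
  (∀ v : V, ι ⁅T.H, v⁆ = hh * ι v) ∧
  (∀ v : V, ι ⁅T.H', v⁆ = hbar * ι v)

/-- The Lie module `V`, identified with `ℂ[h,h̄]` via the linear equivalence `ι`, is a copy of
`Ω(λ, a, β(h̄))` (with auxiliary polynomial `α(h̄)`). -/
def OmegaActOn (T : TakiffData g) (l a : ℂ) (α β : Polynomial ℂ) {V : Type} [AddCommGroup V]
    [Module ℂ V] [LieRingModule g V] (ι : V ≃ₗ[ℂ] P2) : Prop :=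
  (∀ v : V, ι ⁅T.E, v⁆ =
      (Cc (l / 2) * hh + emb α) * sh (-2) (ι v) - Cc l * (hbar + Cc a) * pd (sh (-2) (ι v))) ∧
  (∀ v : V, ι ⁅T.F, v⁆ =
      -((Cc (1 / (2 * l)) * hh - emb β) * sh 2 (ι v))
        - Cc (1 / l) * (hbar - Cc a) * pd (sh 2 (ι v))) ∧
  (∀ v : V, ι ⁅T.E', v⁆ = Cc (l / 2) * (hbar + Cc a) * sh (-2) (ι v)) ∧
  (∀ v : V, ι ⁅T.F', v⁆ = -(Cc (1 / (2 * l)) * (hbar - Cc a) * sh 2 (ι v))) ∧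
  (∀ v : V, ι ⁅T.H, v⁆ = hh * ι v) ∧
  (∀ v : V, ι ⁅T.H', v⁆ = hbar * ι v)

end Tk


namespace Tk

lemma sh_hbar_mul_aux (c : ℂ) (γ : P2) : sh c (hbar * γ) = hbar * sh c γ := by
  simp [sh, hbar, map_mul]

end Tk

theorem stmt3 {g : Type} [LieRing g] [LieAlgebra ℂ g] (T : Tk.TakiffData g)
    (l η θ : ℂ) (hl : l ≠ 0) (α β : Polynomial ℂ)
    [LieRingModule g P2] [LieModule ℂ g P2]
    (hOm : Tk.OmegaAct T l 0 α β)
    {L : Type} [AddCommGroup L] [Module ℂ L] [LieRingModule g L] [LieModule ℂ g L]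
    (hLsimple : IsSimpleOrder (LieSubmodule ℂ g L))
    (v : L) (hv : Tk.IsHW T η θ v) :
    ∃ N : LieSubmodule ℂ g (P2 ⊗[ℂ] L),
      (N : Submodule ℂ (P2 ⊗[ℂ] L)) =
          Submodule.span ℂ {z : P2 ⊗[ℂ] L | ∃ (γ : P2) (w : L), z = (Tk.hbar * γ) ⊗ₜ[ℂ] w} ∧
      N ≠ ⊥ ∧ N ≠ ⊤ ∧ ¬ IsSimpleOrder (LieSubmodule ℂ g (P2 ⊗[ℂ] L)) := by
  obtain ⟨hE, hF, hE', hF', hH, hH'⟩ := hOm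
  set S : Set (P2 ⊗[ℂ] L) := {z : P2 ⊗[ℂ] L | ∃ (γ : P2) (w : L), z = (Tk.hbar * γ) ⊗ₜ[ℂ] w}
    with hS
  set sp : Submodule ℂ (P2 ⊗[ℂ] L) := Submodule.span ℂ S with hsp
  -- key: each x : g maps h̄·P2 into h̄·P2
  have key : ∀ x : g, ∀ γ : P2, ∃ δ : P2, ⁅x, Tk.hbar * γ⁆ = Tk.hbar * δ := by
    intro x
    have hx : x ∈ Submodule.span ℂ (Set.range T.bas) := by
      rw [T.bas.span_eq]; trivial
    induction hx using Submodule.span_induction with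
    | mem y hy =>
        obtain ⟨i, rfl⟩ := hy
        rw [T.hbas]
        fin_cases i <;> intro γ
        · refine ⟨(Tk.Cc (l / 2) * Tk.hh + Tk.emb α) * Tk.sh (-2) γ
            - Tk.Cc l * Tk.pd (Tk.sh (-2) (Tk.hbar * γ)), ?_⟩
          show ⁅T.E, Tk.hbar * γ⁆ = _
          rw [hE, Tk.sh_hbar_mul_aux]
          simp only [Tk.Cc, map_zero, add_zero]
          ring
        · refine ⟨-((Tk.Cc (1 / (2 * l)) * Tk.hh - Tk.emb β) * Tk.sh 2 γ)
            - Tk.Cc (1 / l) * Tk.pd (Tk.sh 2 (Tk.hbar * γ)), ?_⟩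
          show ⁅T.F, Tk.hbar * γ⁆ = _
          rw [hF, Tk.sh_hbar_mul_aux]
          simp only [Tk.Cc, map_zero, sub_zero]
          ring
        · exact ⟨Tk.hh * γ, by show ⁅T.H, Tk.hbar * γ⁆ = _; rw [hH]; ring⟩
        · refine ⟨Tk.Cc (l / 2) * Tk.sh (-2) (Tk.hbar * γ), ?_⟩
          show ⁅T.E', Tk.hbar * γ⁆ = _
          rw [hE']
          simp only [Tk.Cc, map_zero, add_zero]
          ring
        · refine ⟨-(Tk.Cc (1 / (2 * l)) * Tk.sh 2 (Tk.hbar * γ)), ?_⟩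
          show ⁅T.F', Tk.hbar * γ⁆ = _
          rw [hF']
          simp only [Tk.Cc, map_zero, sub_zero]
          ring
        · exact ⟨Tk.hbar * γ, by show ⁅T.H', Tk.hbar * γ⁆ = _; rw [hH']⟩
    | zero => intro γ; exact ⟨0, by simp⟩
    | add y z _ _ hy hz =>
        intro γ
        obtain ⟨d1, h1⟩ := hy γ
        obtain ⟨d2, h2⟩ := hz γ
        exact ⟨d1 + d2, by rw [add_lie, h1, h2, mul_add]⟩
    | smul c y _ hy =>
        intro γ
        obtain ⟨d, h1⟩ := hy γ
        exact ⟨c • d, by rw [smul_lie, h1, mul_smul_comm]⟩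
  have lie_mem : ∀ (x : g) (m : P2 ⊗[ℂ] L), m ∈ sp → ⁅x, m⁆ ∈ sp := by
    intro x m hm
    induction hm using Submodule.span_induction with
    | mem z hz =>
        obtain ⟨γ, w, rfl⟩ := hz
        rw [TensorProduct.LieModule.lie_tmul_right]
        obtain ⟨δ, hδ⟩ := key x γ
        refine add_mem (Submodule.subset_span ?_) (Submodule.subset_span ?_)
        · exact ⟨δ, w, by rw [hδ]⟩
        · exact ⟨γ, ⁅x, w⁆, rfl⟩
    | zero => simp
    | add y z _ _ hy hz => rw [lie_add]; exact add_mem hy hz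
    | smul c y _ hy => rw [lie_smul]; exact Submodule.smul_mem _ _ hy
  let N : LieSubmodule ℂ g (P2 ⊗[ℂ] L) :=
    { toSubmodule := sp, lie_mem := fun {x m} hm => lie_mem x m hm }
  have hb : N ≠ ⊥ := by
    intro hbot
    have hmem : (Tk.hbar ⊗ₜ[ℂ] v : P2 ⊗[ℂ] L) ∈ N :=
      Submodule.subset_span ⟨1, v, by rw [mul_one]⟩
    rw [hbot] at hmem
    have hz : (Tk.hbar ⊗ₜ[ℂ] v : P2 ⊗[ℂ] L) = 0 :=
      (LieSubmodule.mem_bot (R := ℂ) (L := g) _).mp hmem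
    have : v = 0 := by
      have h2 := congrArg (fun z => (TensorProduct.lid ℂ L)
        (LinearMap.rTensor L ((MvPolynomial.aeval ![(0:ℂ), 1]).toLinearMap) z)) hz
      simpa [Tk.hbar] using h2
    exact hv.1 this
  have ht : N ≠ ⊤ := by
    intro htop
    have hmem : ((1 : P2) ⊗ₜ[ℂ] v : P2 ⊗[ℂ] L) ∈ sp := by
      have : ((1 : P2) ⊗ₜ[ℂ] v : P2 ⊗[ℂ] L) ∈ N := by rw [htop]; trivial
      exact this
    have hkill : ∀ z ∈ sp, (TensorProduct.lid ℂ L)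
        (LinearMap.rTensor L ((MvPolynomial.aeval ![(0:ℂ), 0]).toLinearMap) z) = 0 := by
      intro z hz
      induction hz using Submodule.span_induction with
      | mem y hy =>
          obtain ⟨γ, w, rfl⟩ := hy
          simp [Tk.hbar]
      | zero => simp
      | add y z _ _ hy hz => simp [hy, hz]
      | smul c y _ hy => simp [hy]
    have := hkill _ hmem
    simp at this
    exact hv.1 this
  exact ⟨N, rfl, hb, ht, fun hs => (hs.eq_bot_or_eq_top N).elim hb ht⟩
end
end

section
/- Let λ∈ℂ∖{0}, a∈ℂ∖{0}, and α(h̄),β(h̄)∈ℂ[h̄] polynomials for which the Ω-formulas define a 𝔤-module structure Ω(λ,a,β(h̄)). Let T:ℂ[h,h̄]→ℂ[h,h̄] be the operator T(γ)=ē·(f̄·γ)+(1/4)h̄²γ (actions taken in Ω(λ,a,β(h̄))). Then for every γ(h,h̄)∈ℂ[h,h̄] and every integer r strictly greater than the degree of γ in the variable h, one has Σ_{i=0}^{r} C(r,i)(−1)^{r−i}(a²/4)^{−i} T^{i}(γ) = 0. -/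
open scoped TensorProduct

noncomputable section

lemma Tk.shsh (γ : P2) : Tk.sh (-2) (Tk.sh 2 γ) = γ := by
  have hcomp : (MvPolynomial.aeval (R := ℂ) ![Tk.hh + Tk.Cc (-2), Tk.hbar]).comp
      (MvPolynomial.aeval ![Tk.hh + Tk.Cc 2, Tk.hbar]) = AlgHom.id ℂ P2 := by
    apply MvPolynomial.algHom_ext
    intro i
    match i with
    | 0 =>
      simp only [AlgHom.coe_comp, Function.comp_apply, MvPolynomial.aeval_X,
        Matrix.cons_val_zero, map_add, AlgHom.coe_id, id_eq, Tk.hh, Tk.Cc,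
        MvPolynomial.aeval_C, MvPolynomial.algebraMap_eq]
      rw [add_assoc, ← map_add]
      norm_num
    | 1 =>
      simp only [AlgHom.coe_comp, Function.comp_apply, MvPolynomial.aeval_X,
        Matrix.cons_val_one, Matrix.head_cons, AlgHom.coe_id, id_eq, Tk.hbar,
          Matrix.cons_val_zero]
  have := congrArg (fun φ : P2 →ₐ[ℂ] P2 => φ γ) hcomp
  simpa [Tk.sh] using this

theorem stmt10 {g : Type} [LieRing g] [LieAlgebra ℂ g] (T : Tk.TakiffData g)
    (l a : ℂ) (hl : l ≠ 0) (ha : a ≠ 0) (α β : Polynomial ℂ)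
    [LieRingModule g P2] [LieModule ℂ g P2]
    (hOm : Tk.OmegaAct T l a α β) :
    ∀ (γ : P2) (r : ℕ), MvPolynomial.degreeOf (0 : Fin 2) γ < r →
      ∑ i ∈ Finset.range (r + 1),
        ((r.choose i : ℂ) * (-1 : ℂ) ^ (r - i) * ((a ^ 2 / 4)⁻¹) ^ i) •
          ((fun z : P2 => ⁅T.E', ⁅T.F', z⁆⁆ + Tk.Cc (1 / 4) * Tk.hbar ^ 2 * z)^[i] γ)
        = 0 := by
  obtain ⟨hE, hF, hE', hF', hH, hH'⟩ := hOm
  have hOp : ∀ z : P2, ⁅T.E', ⁅T.F', z⁆⁆ + Tk.Cc (1 / 4) * Tk.hbar ^ 2 * z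
      = (a ^ 2 / 4) • z := by
    intro z
    rw [hF' z, hE' _]
    have h1 : Tk.sh (-2) (-(Tk.Cc (1 / (2 * l)) * (Tk.hbar - Tk.Cc a) * Tk.sh 2 z))
        = -(Tk.Cc (1 / (2 * l)) * (Tk.hbar - Tk.Cc a) * z) := by
      have : Tk.sh (-2) (Tk.Cc (1 / (2 * l)) * (Tk.hbar - Tk.Cc a) * Tk.sh 2 z)
          = Tk.Cc (1 / (2 * l)) * (Tk.hbar - Tk.Cc a) * z := by
        rw [show Tk.sh (-2) (Tk.Cc (1 / (2 * l)) * (Tk.hbar - Tk.Cc a) * Tk.sh 2 z)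
            = Tk.sh (-2) (Tk.Cc (1 / (2 * l)) * (Tk.hbar - Tk.Cc a)) *
              Tk.sh (-2) (Tk.sh 2 z) from map_mul _ _ _, Tk.shsh]
        congr 1
        simp [Tk.sh, Tk.hbar, Tk.Cc]
      simp only [Tk.sh] at this ⊢
      rw [map_neg, this]
    rw [h1]
    have h12 : Tk.Cc (l / 2) * Tk.Cc (1 / (2 * l)) = Tk.Cc (1 / 4) := by
      simp only [Tk.Cc]
      rw [← map_mul]
      congr 1
      field_simp
      ring
    have h4 : (a ^ 2 / 4) • z = Tk.Cc (1 / 4) * Tk.Cc a * Tk.Cc a * z := by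
      simp only [Tk.Cc]
      rw [← map_mul, ← map_mul, MvPolynomial.smul_eq_C_mul]
      congr 2
      ring
    rw [h4]
    linear_combination (-((Tk.hbar + Tk.Cc a) * (Tk.hbar - Tk.Cc a) * z)) * h12
  intro γ r hr
  have hiter : ∀ i : ℕ,
      (fun z : P2 => ⁅T.E', ⁅T.F', z⁆⁆ + Tk.Cc (1 / 4) * Tk.hbar ^ 2 * z)^[i] γ
        = ((a ^ 2 / 4) ^ i) • γ := by
    intro i
    induction i with
    | zero => simp
    | succ i ih =>
      rw [Function.iterate_succ_apply', ih]
      show ⁅T.E', ⁅T.F', _⁆⁆ + _ = _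
      rw [hOp, smul_smul, pow_succ]
      ring_nf
  have ha4 : (a ^ 2 / 4 : ℂ) ≠ 0 := by
    simp [div_eq_iff, pow_eq_zero_iff, ha]
  have hr0 : r ≠ 0 := by omega
  calc ∑ i ∈ Finset.range (r + 1),
        ((r.choose i : ℂ) * (-1 : ℂ) ^ (r - i) * ((a ^ 2 / 4)⁻¹) ^ i) •
          ((fun z : P2 => ⁅T.E', ⁅T.F', z⁆⁆ + Tk.Cc (1 / 4) * Tk.hbar ^ 2 * z)^[i] γ)
      = (∑ i ∈ Finset.range (r + 1), (1 : ℂ) ^ i * (-1 : ℂ) ^ (r - i) * (r.choose i : ℂ)) • γ := by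
        rw [Finset.sum_smul]
        refine Finset.sum_congr rfl fun i _ => ?_
        rw [hiter i, smul_smul]
        congr 1
        rw [mul_assoc, ← mul_pow, inv_mul_cancel₀ ha4]
        ring
    _ = 0 := by
        have := add_pow (1 : ℂ) (-1) r
        push_cast at this
        rw [← this]
        simp [hr0, zero_pow hr0]
end
end

section
/- Let λ∈ℂ∖{0}, a,b,θ∈ℂ and η∈ℂ∖{0}, and let v be the highest weight vector of L(η,θ). Then for every nonzero polynomial γ(h,h̄)∈ℂ[h,h̄] and every integer r strictly greater than the degree of γ in the variable h, one has Σ_{i=0}^{r} C(r,i)(−1)^{r−i} λ^{−i} f̄^{i}·(γ⊗v) ≠ 0 in the 𝔤-module Θ(λ,a,b)⊗L(η,θ), where f̄^{i} denotes the i-fold application of the action of f̄ on the tensor product module. -/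
open scoped TensorProduct

noncomputable section

section AuxStmt11

open Polynomial

/-- Auxiliary: `ℂ[h̄]` as multivariable polynomials in one variable. -/
abbrev A1 : Type := MvPolynomial (Fin 1) ℂ

/-- The isomorphism `ℂ[h,h̄] ≃ (ℂ[h̄])[h]`. -/
def EE : P2 ≃ₐ[ℂ] Polynomial A1 := MvPolynomial.finSuccEquiv ℂ 1

lemma EE_C (c : ℂ) : EE (MvPolynomial.C c) = Polynomial.C (MvPolynomial.C c) := by
  simp [EE, MvPolynomial.finSuccEquiv_apply]

lemma coeff_taylor_of_le {R : Type*} [CommRing R] (q : R[X]) (d : ℕ) (h : q.natDegree ≤ d)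
    (r : R) : (Polynomial.taylor r q).coeff d = q.coeff d := by
  rw [Polynomial.taylor_coeff]
  have hc : Polynomial.hasseDeriv d q = Polynomial.C (q.coeff d) := by
    ext n
    rw [Polynomial.hasseDeriv_coeff, Polynomial.coeff_C]
    cases n with
    | zero => simp
    | succ m =>
        have h2 : q.natDegree < m + 1 + d := by omega
        simp [Polynomial.coeff_eq_zero_of_natDegree_lt h2]
  rw [hc, Polynomial.eval_C]

lemma EE_sh (p : P2) : EE (Tk.sh 2 p) = Polynomial.taylor (MvPolynomial.C 2) (EE p) := by
  induction p using MvPolynomial.induction_on with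
  | C a => simp [Tk.sh, EE_C]
  | add p q hp hq => simp only [Tk.sh, map_add] at hp hq ⊢; rw [hp, hq]
  | mul_X p i hp =>
      have h1 : Tk.sh 2 (p * MvPolynomial.X i)
          = Tk.sh 2 p
            * MvPolynomial.aeval ![Tk.hh + Tk.Cc 2, Tk.hbar] (MvPolynomial.X i : P2) := by
        unfold Tk.sh; rw [map_mul]
      rw [h1, map_mul, hp, map_mul, Polynomial.taylor_mul]
      refine congrArg (fun x => Polynomial.taylor (MvPolynomial.C 2) (EE p) * x) ?_
      refine Fin.cases ?_ ?_ i
      · rw [MvPolynomial.aeval_X]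
        show EE (Tk.hh + Tk.Cc 2) = _
        rw [map_add, Tk.Cc, EE_C, Tk.hh,
          show EE (MvPolynomial.X 0) = Polynomial.X from MvPolynomial.finSuccEquiv_X_zero,
          Polynomial.taylor_X]
      · intro j
        rw [MvPolynomial.aeval_X,
          show EE (MvPolynomial.X j.succ) = Polynomial.C (MvPolynomial.X j) from
            MvPolynomial.finSuccEquiv_X_succ, Polynomial.taylor_C]
        fin_cases j
        simp only [Matrix.cons_val_succ, Matrix.cons_val_fin_one, Tk.hbar]
        rw [show (1 : Fin 2) = Fin.succ 0 from rfl,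
          show EE (MvPolynomial.X (Fin.succ (0 : Fin 1))) = Polynomial.C (MvPolynomial.X 0) from
            MvPolynomial.finSuccEquiv_X_succ]
        rfl

end AuxStmt11


theorem stmt11 {g : Type} [LieRing g] [LieAlgebra ℂ g] (T : Tk.TakiffData g)
    (l a b θ : ℂ) (hl : l ≠ 0) (η : ℂ) (hη : η ≠ 0)
    [LieRingModule g P2] [LieModule ℂ g P2]
    (hTh : Tk.ThetaAct T l a b)
    {L : Type} [AddCommGroup L] [Module ℂ L] [LieRingModule g L] [LieModule ℂ g L]
    (hLsimple : IsSimpleOrder (LieSubmodule ℂ g L))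
    (v : L) (hv : Tk.IsHW T η θ v) :
    ∀ (γ : P2) (r : ℕ), γ ≠ 0 → MvPolynomial.degreeOf (0 : Fin 2) γ < r →
      ∑ i ∈ Finset.range (r + 1),
        ((r.choose i : ℂ) * (-1 : ℂ) ^ (r - i) * l⁻¹ ^ i) •
          ((fun z : P2 ⊗[ℂ] L => ⁅T.F', z⁆)^[i] (γ ⊗ₜ[ℂ] v))
        ≠ 0 := by
  classical
  obtain ⟨hv0, hvE, _hvE', _hvH, hvH'⟩ := hv
  set FL : Module.End ℂ L := LieModule.toEnd ℂ g L T.F' with hFLdef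
  have hFLapp : ∀ x : L, FL x = ⁅T.F', x⁆ := fun x => rfl
  have hH'w : ∀ k : ℕ, ⁅T.H', (FL ^ k) v⁆ = η • (FL ^ k) v := by
    intro k
    induction k with
    | zero => simpa using hvH'
    | succ n ih =>
        rw [pow_succ', Module.End.mul_apply, hFLapp, leibniz_lie,
          show ⁅T.H', T.F'⁆ = 0 by rw [← lie_skew, T.rF'H', neg_zero],
          zero_lie, zero_add, ih, lie_smul]
  have hEw : ∀ k : ℕ, ⁅T.E, (FL ^ (k+1)) v⁆ = (((k+1 : ℕ) : ℂ) * η) • (FL ^ k) v := by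
    intro k
    induction k with
    | zero =>
        rw [pow_one, hFLapp, leibniz_lie, T.rEF', hvE, lie_zero, add_zero]
        simpa using hvH'
    | succ n ih =>
        rw [show (FL ^ (n+1+1)) v = ⁅T.F', (FL ^ (n+1)) v⁆ by
              rw [pow_succ', Module.End.mul_apply, hFLapp]]
        rw [leibniz_lie, T.rEF', ih, lie_smul, hH'w (n+1)]
        rw [show ⁅T.F', (FL ^ n) v⁆ = (FL ^ (n+1)) v by
              rw [pow_succ', Module.End.mul_apply, hFLapp]]
        rw [← add_smul]
        congr 1
        push_cast
        ring
  have hFLne : ∀ k : ℕ, (FL ^ k) v ≠ 0 := by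
    intro k
    induction k with
    | zero => simpa using hv0
    | succ n ih =>
        intro hzero
        have h1 := hEw n
        rw [hzero, lie_zero] at h1
        have hs : ((n+1 : ℕ) : ℂ) * η ≠ 0 :=
          mul_ne_zero (Nat.cast_ne_zero.mpr (Nat.succ_ne_zero n)) hη
        rcases smul_eq_zero.mp h1.symm with h | h
        · exact hs h
        · exact ih h
  set Fop : Module.End ℂ (P2 ⊗[ℂ] L) := LieModule.toEnd ℂ g (P2 ⊗[ℂ] L) T.F' with hFopdef
  have hfun : (fun z : P2 ⊗[ℂ] L => ⁅T.F', z⁆) = ⇑Fop := by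
    funext z
    rw [hFopdef, LieModule.toEnd_apply_apply]
  set Sop : Module.End ℂ P2 :=
    (MvPolynomial.aeval ![Tk.hh + Tk.Cc 2, Tk.hbar] : P2 →ₐ[ℂ] P2).toLinearMap with hSopdef
  have hSopapp : ∀ p : P2, Sop p = Tk.sh 2 p := fun p => rfl
  have hFop : Fop = LinearMap.rTensor L (l • Sop) + LinearMap.lTensor P2 FL := by
    apply TensorProduct.ext'
    intro p x
    rw [LinearMap.add_apply, LinearMap.rTensor_tmul, LinearMap.lTensor_tmul]
    show ⁅T.F', p ⊗ₜ[ℂ] x⁆ = _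
    rw [TensorProduct.LieModule.lie_tmul_right, hTh.2.1 p, LinearMap.smul_apply, hSopapp, hFLapp,
      show Tk.Cc l = MvPolynomial.C l from rfl, ← MvPolynomial.smul_eq_C_mul]
  intro γ r hγ0 _hdeg hX
  set d : ℕ := MvPolynomial.degreeOf 0 γ with hd
  have hqdeg : (EE γ).natDegree = d := MvPolynomial.natDegree_finSuccEquiv γ
  have hq0 : EE γ ≠ 0 := by
    intro h
    exact hγ0 (by simpa using EE.injective (by simpa using h))
  have hc0 : (EE γ).coeff d ≠ 0 := by
    rw [← hqdeg]
    exact Polynomial.leadingCoeff_ne_zero.mpr hq0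
  obtain ⟨ν, hν⟩ := MvPolynomial.ne_zero_iff.mp hc0
  set ψ : P2 →ₗ[ℂ] ℂ :=
    { toFun := fun p => MvPolynomial.coeff ν ((EE p).coeff d)
      map_add' := by intro p q; rw [map_add, Polynomial.coeff_add, MvPolynomial.coeff_add]
      map_smul' := by
        intro c p
        rw [MvPolynomial.smul_eq_C_mul, map_mul, EE_C, Polynomial.coeff_C_mul,
          MvPolynomial.coeff_C_mul]
        rfl } with hψdef
  have hψapp : ∀ p : P2, ψ p = MvPolynomial.coeff ν ((EE p).coeff d) := fun p => rfl
  have hk1 : ∀ p : P2, (EE p).natDegree ≤ d → ψ (Sop p) = ψ p := by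
    intro p hp
    rw [hψapp, hψapp, hSopapp, EE_sh, coeff_taylor_of_le _ _ hp]
  have hk2 : ∀ p : P2, (EE p).natDegree ≤ d → (EE (Sop p)).natDegree ≤ d := by
    intro p hp
    rw [hSopapp, EE_sh, Polynomial.natDegree_taylor]
    exact hp
  set A0 : Module.End ℂ P2 := Sop + (-1 : ℂ) • 1 with hA0def
  have hA0app : ∀ p : P2, A0 p = Sop p - p := by
    intro p
    rw [hA0def, LinearMap.add_apply, LinearMap.smul_apply, Module.End.one_apply, neg_one_smul,
      ← sub_eq_add_neg]
  have hk3 : ∀ p : P2, (EE p).natDegree ≤ d → (EE (A0 p)).natDegree ≤ d := by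
    intro p hp
    rw [hA0app, map_sub]
    exact le_trans (Polynomial.natDegree_sub_le _ _) (max_le (hk2 p hp) hp)
  have hDb : ∀ m : ℕ, (EE ((A0 ^ m) γ)).natDegree ≤ d := by
    intro m
    induction m with
    | zero => rw [pow_zero, Module.End.one_apply, hqdeg]
    | succ n ih =>
        rw [pow_succ', Module.End.mul_apply]
        exact hk3 _ ih
  have hψA0 : ∀ m : ℕ, ψ ((A0 ^ (m+1)) γ) = 0 := by
    intro m
    rw [pow_succ', Module.End.mul_apply, hA0app, map_sub, hk1 _ (hDb m), sub_self]
  set Ψ : (P2 ⊗[ℂ] L) →ₗ[ℂ] L :=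
    (TensorProduct.lid ℂ L).toLinearMap ∘ₗ LinearMap.rTensor L ψ with hΨdef
  have hΨtmul : ∀ (p : P2) (x : L), Ψ (p ⊗ₜ[ℂ] x) = ψ p • x := by
    intro p x
    rw [hΨdef, LinearMap.comp_apply, LinearMap.rTensor_tmul]
    exact TensorProduct.lid_tmul x (ψ p)
  have hXop :
      (∑ i ∈ Finset.range (r+1),
        ((r.choose i : ℂ) * (-1 : ℂ) ^ (r - i) * l⁻¹ ^ i) • Fop ^ i) (γ ⊗ₜ[ℂ] v) = 0 := by
    rw [LinearMap.sum_apply, ← hX]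
    apply Finset.sum_congr rfl
    intro i _
    rw [LinearMap.smul_apply, Module.End.pow_apply, hfun]
  have hcomm1 : Commute (l⁻¹ • Fop) ((-1 : ℂ) • (1 : Module.End ℂ (P2 ⊗[ℂ] L))) :=
    (Commute.one_right _).smul_right _
  have key : (l⁻¹ • Fop + (-1 : ℂ) • 1) ^ r
      = ∑ i ∈ Finset.range (r+1),
          ((r.choose i : ℂ) * (-1 : ℂ) ^ (r - i) * l⁻¹ ^ i) • Fop ^ i := by
    rw [hcomm1.add_pow]
    apply Finset.sum_congr rfl
    intro i _
    rw [smul_pow, smul_pow, one_pow]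
    rw [show ((r.choose i : ℕ) : Module.End ℂ (P2 ⊗[ℂ] L)) = ((r.choose i : ℂ)) • 1 by
          rw [← map_natCast (algebraMap ℂ (Module.End ℂ (P2 ⊗[ℂ] L))) (r.choose i),
            Algebra.algebraMap_eq_smul_one]]
    rw [smul_mul_smul_comm, smul_mul_smul_comm, mul_one, mul_one]
    congr 1
    ring
  rw [← key] at hXop
  have hsplit : l⁻¹ • Fop + (-1 : ℂ) • 1
      = LinearMap.rTensor L A0 + LinearMap.lTensor P2 (l⁻¹ • FL) := by
    rw [hFop, smul_add, ← LinearMap.rTensor_smul, ← LinearMap.lTensor_smul, smul_smul,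
      inv_mul_cancel₀ hl, one_smul, hA0def, LinearMap.rTensor_add, LinearMap.rTensor_smul,
      show LinearMap.rTensor L (1 : Module.End ℂ P2) = (1 : Module.End ℂ (P2 ⊗[ℂ] L)) from
        LinearMap.rTensor_id L P2]
    abel
  have hcomm2 : Commute (LinearMap.rTensor L A0) (LinearMap.lTensor P2 (l⁻¹ • FL)) := by
    show _ * _ = _ * _
    rw [Module.End.mul_eq_comp, Module.End.mul_eq_comp, LinearMap.rTensor_comp_lTensor,
      LinearMap.lTensor_comp_rTensor]
  rw [hsplit, hcomm2.add_pow'] at hXop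
  have hΨ0 : Ψ ((∑ m ∈ Finset.HasAntidiagonal.antidiagonal r,
      r.choose m.1 • (LinearMap.rTensor L A0 ^ m.1 * LinearMap.lTensor P2 (l⁻¹ • FL) ^ m.2))
        (γ ⊗ₜ[ℂ] v)) = 0 := by
    rw [hXop, map_zero]
  rw [LinearMap.sum_apply, map_sum] at hΨ0
  have hterm : ∀ m ∈ Finset.HasAntidiagonal.antidiagonal r,
      Ψ ((r.choose m.1 • (LinearMap.rTensor L A0 ^ m.1 * LinearMap.lTensor P2 (l⁻¹ • FL) ^ m.2))
          (γ ⊗ₜ[ℂ] v))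
        = r.choose m.1 • (ψ ((A0 ^ m.1) γ) • (((l⁻¹ • FL) ^ m.2) v)) := by
    intro m _
    rw [LinearMap.smul_apply, map_nsmul, Module.End.mul_apply, LinearMap.lTensor_pow,
      LinearMap.rTensor_pow, LinearMap.lTensor_tmul, LinearMap.rTensor_tmul, hΨtmul]
  rw [Finset.sum_congr rfl hterm] at hΨ0
  rw [Finset.sum_eq_single_of_mem (0, r)
      (Finset.HasAntidiagonal.mem_antidiagonal.mpr (by simp)) ?van] at hΨ0
  case van =>
    intro b hb hbne
    have hb1 : b.1 ≠ 0 := by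
      intro h0
      apply hbne
      have := Finset.HasAntidiagonal.mem_antidiagonal.mp hb
      rw [h0, zero_add] at this
      exact Prod.ext h0 this
    obtain ⟨m, hm⟩ := Nat.exists_eq_succ_of_ne_zero hb1
    rw [hm, hψA0 m, zero_smul, smul_zero]
  rw [Nat.choose_zero_right, one_smul, pow_zero, Module.End.one_apply] at hΨ0
  rw [smul_pow, LinearMap.smul_apply, smul_smul] at hΨ0
  rcases smul_eq_zero.mp hΨ0 with h | h
  · rcases mul_eq_zero.mp h with h' | h'
    · rw [hψapp] at h'
      exact hν h'
    · exact pow_ne_zero r (inv_ne_zero hl) h'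
  · exact hFLne r h
end
end

section
/- Let λ∈ℂ∖{0}, a,b,θ∈ℂ and η∈ℂ∖{0}. Then the 𝔤-module Θ(λ,a,b)⊗L(η,θ) is not isomorphic to Θ(λ',a',b') for any λ'∈ℂ∖{0} and a',b'∈ℂ. -/
open scoped TensorProduct

noncomputable section

namespace Tk

variable {g : Type} [LieRing g] [LieAlgebra ℂ g]

lemma sh_C (c d : ℂ) : sh c (Cc d) = Cc d := by
  simp [sh, Cc]

lemma sh_one (c : ℂ) : sh c (1 : P2) = 1 := map_one _

lemma sh_mul (c : ℂ) (p q : P2) : sh c (p * q) = sh c p * sh c q := map_mul _ _ _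

lemma sh_cancel (p : P2) : sh (-2) (sh 2 p) = p := by
  induction p using MvPolynomial.induction_on with
  | C c => simp [sh, Cc]
  | add p q hp hq => simp only [sh] at *; rw [map_add, map_add, hp, hq]
  | mul_X p i hp =>
    simp only [sh] at *
    rw [map_mul, map_mul, hp]
    refine congrArg (p * ·) ?_
    fin_cases i <;> simp [hh, hbar, Cc]

/-- coefficient-of-h̄ linear functional -/
def psi : P2 →ₗ[ℂ] ℂ := MvPolynomial.lcoeff ℂ (Finsupp.single (1 : Fin 2) 1)

lemma psi_hbar : psi hbar = 1 := by
  simp [psi, hbar, MvPolynomial.lcoeff, MvPolynomial.coeff_X]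

lemma psi_hbar_sq : psi (hbar ^ 2) = 0 := by
  simp [psi, hbar, MvPolynomial.lcoeff, MvPolynomial.X_pow_eq_monomial,
    MvPolynomial.coeff_monomial, Finsupp.single_eq_single_iff]

lemma psi_C (c : ℂ) : psi (Cc c) = 0 := by
  simp only [psi, Cc, MvPolynomial.lcoeff_apply, MvPolynomial.coeff_C]
  rw [if_neg]
  exact fun h => one_ne_zero (Finsupp.single_eq_zero.mp h.symm)

lemma psi_C_mul (c : ℂ) (p : P2) : psi (Cc c * p) = c * psi p := by
  simp [psi, Cc, MvPolynomial.lcoeff, MvPolynomial.coeff_C_mul]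

end Tk

theorem stmt12 {g : Type} [LieRing g] [LieAlgebra ℂ g] (T : Tk.TakiffData g)
    (l a b θ : ℂ) (hl : l ≠ 0) (η : ℂ) (hη : η ≠ 0)
    [LieRingModule g P2] [LieModule ℂ g P2]
    (hTh : Tk.ThetaAct T l a b)
    {L : Type} [AddCommGroup L] [Module ℂ L] [LieRingModule g L] [LieModule ℂ g L]
    (hLsimple : IsSimpleOrder (LieSubmodule ℂ g L))
    (v : L) (hv : Tk.IsHW T η θ v) :
    ∀ (l' a' b' : ℂ), l' ≠ 0 →
      ∀ (V : Type) [AddCommGroup V] [Module ℂ V] [LieRingModule g V] [LieModule ℂ g V]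
        (ι : V ≃ₗ[ℂ] P2), Tk.ThetaActOn T l' a' b' ι →
          IsEmpty ((P2 ⊗[ℂ] L) ≃ₗ⁅ℂ,g⁆ V) := by
  intro l' a' b' hl' V _ _ _ _ ι hV
  refine ⟨fun φ => ?_⟩
  classical
  -- the operator z ↦ ⁅E',⁅F',z⁆⁆ + 4⁻¹•⁅H',⁅H',z⁆⁆ + (a'/4)•z vanishes on V
  have hVzero : ∀ y : V,
      ⁅T.E', ⁅T.F', y⁆⁆ + (4:ℂ)⁻¹ • ⁅T.H', ⁅T.H', y⁆⁆ + (a'/4) • y = 0 := by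
    intro y
    apply ι.injective
    rw [map_zero, map_add, map_add, map_smul, map_smul, hV.2.2.1, hV.2.1,
      hV.2.2.2.2.2, hV.2.2.2.2.2]
    rw [Tk.sh_mul, Tk.sh_C, Tk.sh_cancel]
    simp only [MvPolynomial.smul_eq_C_mul, Tk.Cc]
    have hAB : MvPolynomial.C (σ := Fin 2) (1 / (4 * l')) * MvPolynomial.C l'
        = MvPolynomial.C ((4:ℂ)⁻¹) := by
      rw [← map_mul]; congr 1; field_simp
    have hCa : MvPolynomial.C (σ := Fin 2) (a' / 4)
        = MvPolynomial.C ((4:ℂ)⁻¹) * MvPolynomial.C a' := by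
      rw [← map_mul]; congr 1; ring
    linear_combination (-((Tk.hbar ^ 2 + MvPolynomial.C a') * ι y)) * hAB + (ι y) * hCa
  -- hence it vanishes on the tensor product
  have hz : ⁅T.E', ⁅T.F', (1:P2) ⊗ₜ[ℂ] v⁆⁆
      + (4:ℂ)⁻¹ • ⁅T.H', ⁅T.H', (1:P2) ⊗ₜ[ℂ] v⁆⁆ + (a'/4) • ((1:P2) ⊗ₜ[ℂ] v) = 0 := by
    apply φ.injective
    show (φ : P2 ⊗[ℂ] L →ₗ⁅ℂ,g⁆ V) _ = (φ : P2 ⊗[ℂ] L →ₗ⁅ℂ,g⁆ V) 0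
    rw [map_zero, map_add, map_add,
      map_smul, map_smul, LieModuleHom.map_lie,
      LieModuleHom.map_lie, LieModuleHom.map_lie, LieModuleHom.map_lie]
    exact hVzero _
  -- now evaluate the operator at 1 ⊗ v explicitly
  have hw : ⁅T.E', ⁅T.F', v⁆⁆ = 0 := by
    rw [leibniz_lie, T.rE'F', hv.2.2.1]
    simp
  have e1 : ⁅T.E', Tk.Cc l⁆ = -(Tk.Cc (1/4) * (Tk.hbar ^ 2 + Tk.Cc a)) := by
    rw [hTh.2.2.1, Tk.sh_C]
    have hAB : Tk.Cc (1 / (4 * l)) * Tk.Cc l = Tk.Cc (1/4) := by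
      simp only [Tk.Cc]; rw [← map_mul]; congr 1; field_simp
    linear_combination (-(Tk.hbar ^ 2 + Tk.Cc a)) * hAB
  have e2 : ⁅T.E', (1:P2)⁆ = -(Tk.Cc (1/(4*l)) * (Tk.hbar ^ 2 + Tk.Cc a)) := by
    rw [hTh.2.2.1, Tk.sh_one, mul_one]
  have hH1 : ⁅T.H', (1:P2)⁆ = Tk.hbar := by rw [hTh.2.2.2.2.2, mul_one]
  have hHb : ⁅T.H', Tk.hbar⁆ = Tk.hbar ^ 2 := by rw [hTh.2.2.2.2.2]; ring
  have hb1 : ⁅T.F', (1:P2) ⊗ₜ[ℂ] v⁆ = Tk.Cc l ⊗ₜ[ℂ] v + (1:P2) ⊗ₜ[ℂ] ⁅T.F', v⁆ := by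
    rw [TensorProduct.LieModule.lie_tmul_right, hTh.2.1, Tk.sh_one, mul_one]
  have hb2 : ⁅T.E', ⁅T.F', (1:P2) ⊗ₜ[ℂ] v⁆⁆
      = (-(Tk.Cc (1/4) * (Tk.hbar ^ 2 + Tk.Cc a))) ⊗ₜ[ℂ] v
        + (-(Tk.Cc (1/(4*l)) * (Tk.hbar ^ 2 + Tk.Cc a))) ⊗ₜ[ℂ] ⁅T.F', v⁆ := by
    rw [hb1, lie_add, TensorProduct.LieModule.lie_tmul_right,
      TensorProduct.LieModule.lie_tmul_right, e1, e2, hv.2.2.1, hw]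
    simp
  have hb3 : ⁅T.H', (1:P2) ⊗ₜ[ℂ] v⁆ = Tk.hbar ⊗ₜ[ℂ] v + η • ((1:P2) ⊗ₜ[ℂ] v) := by
    rw [TensorProduct.LieModule.lie_tmul_right, hH1, hv.2.2.2.2, TensorProduct.tmul_smul]
  have hb4 : ⁅T.H', ⁅T.H', (1:P2) ⊗ₜ[ℂ] v⁆⁆
      = ((Tk.hbar ^ 2) ⊗ₜ[ℂ] v + η • (Tk.hbar ⊗ₜ[ℂ] v))
        + η • (Tk.hbar ⊗ₜ[ℂ] v + η • ((1:P2) ⊗ₜ[ℂ] v)) := by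
    rw [hb3, lie_add, lie_smul η T.H' ((1:P2) ⊗ₜ[ℂ] v),
      TensorProduct.LieModule.lie_tmul_right, hHb, hv.2.2.2.2,
      TensorProduct.tmul_smul, hb3]
  -- project onto the coefficient of h̄
  set Φ : P2 ⊗[ℂ] L →ₗ[ℂ] L := TensorProduct.lift ((LinearMap.lsmul ℂ L).comp Tk.psi) with hΦ
  have hΦt : ∀ (p : P2) (u : L), Φ (p ⊗ₜ[ℂ] u) = Tk.psi p • u := by
    intro p u; simp [hΦ]
  have hpsi_aux : ∀ c d : ℂ, Tk.psi (-(Tk.Cc c * (Tk.hbar ^ 2 + Tk.Cc d))) = 0 := by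
    intro c d
    rw [map_neg, Tk.psi_C_mul, map_add, Tk.psi_hbar_sq, Tk.psi_C]
    ring
  have hfinal : Φ (⁅T.E', ⁅T.F', (1:P2) ⊗ₜ[ℂ] v⁆⁆
      + (4:ℂ)⁻¹ • ⁅T.H', ⁅T.H', (1:P2) ⊗ₜ[ℂ] v⁆⁆ + (a'/4) • ((1:P2) ⊗ₜ[ℂ] v)) = (η/2) • v := by
    have h1 : Tk.psi (1:P2) = 0 := by
      have := Tk.psi_C 1
      simpa [Tk.Cc] using this
    rw [map_add, map_add, map_smul, map_smul, hb2, hb4]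
    simp only [map_add, map_smul, hΦt, hpsi_aux, Tk.psi_hbar_sq, Tk.psi_hbar, h1,
      zero_smul, one_smul, smul_zero, add_zero, zero_add, smul_add, smul_smul]
    module
  rw [hz, map_zero] at hfinal
  have hv0 : v = 0 := by
    rcases smul_eq_zero.mp hfinal.symm with h | h
    · exact absurd h (by simpa [div_eq_zero_iff] using hη)
    · exact h
  exact hv.1 hv0
end
end

section
/- Let λ∈ℂ∖{0}, a∈ℂ∖{0}, η,θ∈ℂ with (η,θ)≠(0,0), and let α(h̄),β(h̄)∈ℂ[h̄] be polynomials for which the Ω-formulas define a 𝔤-module structure Ω(λ,a,β(h̄)). Then for all μ₁,μ₂∈ℂ there is no nonzero vector w in the 𝔤-module Ω(λ,a,β(h̄))⊗L(η,θ) satisfying e·w=μ₁w and ē·w=μ₂w. Consequently, Ω(λ,a,β(h̄))⊗L(η,θ) is not isomorphic, as a 𝔤-module, to any nonzero quotient of the cyclic 𝔤-module U(𝔤)/(U(𝔤)(e−μ₁)+U(𝔤)(ē−μ₂)) (i.e., to any Whittaker module). -/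
open scoped TensorProduct

noncomputable section

namespace Tk

variable {g : Type} [LieRing g] [LieAlgebra ℂ g]

open MvPolynomial

/-- The multidegree `(n, m)`, i.e. of `h^n h̄^m`. -/
def fd (n m : ℕ) : Fin 2 →₀ ℕ := Finsupp.single 0 n + Finsupp.single 1 m

lemma fd_apply0 (n m : ℕ) : fd n m 0 = n := by
  simp [fd, Finsupp.single_apply]

lemma fd_apply1 (n m : ℕ) : fd n m 1 = m := by
  simp [fd, Finsupp.single_apply]

lemma eq_fd (d : Fin 2 →₀ ℕ) : d = fd (d 0) (d 1) := by
  ext i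
  fin_cases i
  · simpa using (fd_apply0 (d 0) (d 1)).symm
  · simpa using (fd_apply1 (d 0) (d 1)).symm

/-- `γ` has degree at most `n` in the variable `h`. -/
def Hdeg (n : ℕ) (γ : P2) : Prop := ∀ d : Fin 2 →₀ ℕ, coeff d γ ≠ 0 → d 0 ≤ n

lemma Hdeg.mono {n n' : ℕ} {γ : P2} (h : Hdeg n γ) (hn : n ≤ n') : Hdeg n' γ :=
  fun d hd => (h d hd).trans hn

lemma Hdeg_zero (n : ℕ) : Hdeg n (0 : P2) := fun d hd => absurd (coeff_zero d) hd

lemma Hdeg.add {n : ℕ} {p q : P2} (hp : Hdeg n p) (hq : Hdeg n q) : Hdeg n (p + q) := by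
  intro d hd
  rw [coeff_add] at hd
  rcases (by by_contra hc; push_neg at hc; rw [hc.1, hc.2, add_zero] at hd; exact hd rfl :
    coeff d p ≠ 0 ∨ coeff d q ≠ 0) with h | h
  · exact hp d h
  · exact hq d h

lemma Hdeg.neg {n : ℕ} {p : P2} (hp : Hdeg n p) : Hdeg n (-p) := by
  intro d hd
  rw [coeff_neg] at hd
  exact hp d (by simpa using hd)

lemma Hdeg.sub {n : ℕ} {p q : P2} (hp : Hdeg n p) (hq : Hdeg n q) : Hdeg n (p - q) := by
  rw [sub_eq_add_neg]; exact hp.add hq.neg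

lemma Hdeg.sum {n : ℕ} {ι : Type*} {s : Finset ι} {f : ι → P2}
    (h : ∀ i ∈ s, Hdeg n (f i)) : Hdeg n (∑ i ∈ s, f i) := by
  classical
  induction s using Finset.induction_on with
  | empty => simpa using Hdeg_zero n
  | @insert a s hni ih =>
    rw [Finset.sum_insert hni]
    exact (h _ (Finset.mem_insert_self _ _)).add
      (ih fun i hi => h i (Finset.mem_insert_of_mem hi))

lemma Hdeg.mul {m n : ℕ} {p q : P2} (hp : Hdeg m p) (hq : Hdeg n q) :
    Hdeg (m + n) (p * q) := by
  classical
  intro d hd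
  rw [coeff_mul] at hd
  obtain ⟨x, hx, hne⟩ := Finset.exists_ne_zero_of_sum_ne_zero hd
  have hx1 : x.1 + x.2 = d := Finset.HasAntidiagonal.mem_antidiagonal.mp hx
  have h1 := hp x.1 (left_ne_zero_of_mul hne)
  have h2 := hq x.2 (right_ne_zero_of_mul hne)
  have : d 0 = x.1 0 + x.2 0 := by rw [← hx1]; rfl
  omega

lemma Hdeg_monomial (e : Fin 2 →₀ ℕ) (a : ℂ) : Hdeg (e 0) (monomial e a) := by
  classical
  intro d hd
  rw [coeff_monomial] at hd
  by_cases he : e = d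
  · subst he; exact le_rfl
  · simp [he] at hd

lemma Hdeg_C (c : ℂ) : Hdeg 0 (Cc c) := by
  rw [Cc, C_apply]
  simpa using Hdeg_monomial 0 c

lemma Hdeg_hh : Hdeg 1 hh := by
  rw [hh, X]
  simpa using Hdeg_monomial (Finsupp.single 0 1) 1

lemma Hdeg_hbar : Hdeg 0 hbar := by
  rw [hbar, X]
  simpa using Hdeg_monomial (Finsupp.single 1 1) 1

lemma Hdeg.pow {k : ℕ} {p : P2} (hp : Hdeg k p) (e : ℕ) : Hdeg (e * k) (p ^ e) := by
  induction e with
  | zero => rw [pow_zero]; simpa [Cc] using (Hdeg_C 1).mono (Nat.zero_le _)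
  | succ e ih =>
    rw [pow_succ]
    have := ih.mul hp
    simpa [Nat.succ_mul] using this

lemma Hdeg.pd {n : ℕ} {γ : P2} (h : Hdeg n γ) : Hdeg n (Tk.pd γ) := by
  classical
  have : Tk.pd γ = ∑ v ∈ γ.support, MvPolynomial.pderiv (1 : Fin 2)
      (monomial v (coeff v γ)) := by
    rw [Tk.pd, ← map_sum, ← as_sum]
  rw [this]
  refine Hdeg.sum fun v hv => ?_
  rw [pderiv_monomial]
  refine (Hdeg_monomial _ _).mono ?_
  have h1 : ((v - Finsupp.single (1 : Fin 2) 1 : Fin 2 →₀ ℕ)) 0 = v 0 := by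
    rw [Finsupp.tsub_apply]
    simp
  rw [h1]
  exact h v (mem_support_iff.mp hv)

lemma monomial_eq' (v : Fin 2 →₀ ℕ) (r : ℂ) :
    monomial v r = Cc r * hh ^ (v 0) * hbar ^ (v 1) := by
  rw [monomial_eq, Finsupp.prod_fintype _ _ (fun i => pow_zero _), Fin.prod_univ_two]
  rw [Cc, hh, hbar, mul_assoc]

lemma sh_monomial (c : ℂ) (v : Fin 2 →₀ ℕ) (r : ℂ) :
    sh c (monomial v r) = Cc r * (hh + Cc c) ^ (v 0) * hbar ^ (v 1) := by
  rw [sh, aeval_monomial, Finsupp.prod_fintype _ _ (fun i => pow_zero _), Fin.prod_univ_two]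
  simp only [Matrix.cons_val_zero, Matrix.cons_val_one, Matrix.head_cons]
  rw [mul_assoc]
  rfl

lemma sh_as_sum (c : ℂ) (γ : P2) :
    sh c γ = ∑ v ∈ γ.support, sh c (monomial v (coeff v γ)) := by
  calc sh c γ = MvPolynomial.aeval ![hh + Cc c, hbar] (∑ v ∈ γ.support, monomial v (coeff v γ))
      := by rw [sh, ← as_sum]
    _ = ∑ v ∈ γ.support, sh c (monomial v (coeff v γ)) := by rw [map_sum]; rfl

lemma Hdeg.sh {n : ℕ} {γ : P2} (h : Hdeg n γ) (c : ℂ) : Hdeg n (Tk.sh c γ) := by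
  rw [sh_as_sum]
  refine Hdeg.sum fun v hv => ?_
  rw [sh_monomial]
  have hv0 : v 0 ≤ n := h v (mem_support_iff.mp hv)
  have h1 : Hdeg 1 (hh + Cc c) := Hdeg_hh.add ((Hdeg_C c).mono (Nat.zero_le _))
  have h2 := ((Hdeg_C (coeff v γ)).mul (h1.pow (v 0))).mul (Hdeg_hbar.pow (v 1))
  exact h2.mono (by omega)


lemma Hdeg_pow_sub (c : ℂ) (k : ℕ) : Hdeg k ((hh + Cc c) ^ (k + 1) - hh ^ (k + 1)) := by
  induction k with
  | zero => simpa using (Hdeg_C c).add (Hdeg_zero 0)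
  | succ k ih =>
    have key : (hh + Cc c) ^ (k + 2) - hh ^ (k + 2) =
        ((hh + Cc c) ^ (k + 1) - hh ^ (k + 1)) * (hh + Cc c) + hh ^ (k + 1) * Cc c := by
      ring
    rw [key]
    have h1 : Hdeg 1 (hh + Cc c) := Hdeg_hh.add ((Hdeg_C c).mono (Nat.zero_le _))
    have h2 := (ih.mul h1)
    have h3 := (Hdeg_hh.pow (k + 1)).mul (Hdeg_C c)
    exact (h2.mono (by omega)).add (h3.mono (by omega))

lemma Hdeg.sh_sub {n : ℕ} {γ : P2} (h : Hdeg n γ) (c : ℂ) :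
    ∀ d : Fin 2 →₀ ℕ, coeff d (Tk.sh c γ - γ) ≠ 0 → d 0 < n := by
  classical
  intro d hd
  have hsum : Tk.sh c γ - γ = ∑ v ∈ γ.support,
      (Tk.sh c (monomial v (coeff v γ)) - monomial v (coeff v γ)) := by
    rw [Finset.sum_sub_distrib, ← sh_as_sum, ← as_sum]
  rw [hsum] at hd
  have hd' : coeff d (∑ v ∈ γ.support,
      (Tk.sh c (monomial v (coeff v γ)) - monomial v (coeff v γ))) ≠ 0 := hd
  rw [MvPolynomial.coeff_sum] at hd'
  obtain ⟨v, hv, hne⟩ := Finset.exists_ne_zero_of_sum_ne_zero hd'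
  have hv0 : v 0 ≤ n := h v (mem_support_iff.mp hv)
  have hdiff : Tk.sh c (monomial v (coeff v γ)) - monomial v (coeff v γ) =
      Cc (coeff v γ) * ((hh + Cc c) ^ (v 0) - hh ^ (v 0)) * hbar ^ (v 1) := by
    rw [sh_monomial, monomial_eq']
    ring
  rw [hdiff] at hne
  rcases Nat.eq_zero_or_eq_succ_pred (v 0) with h0 | h0
  · rw [h0] at hne
    simp at hne
  · rw [h0] at hne
    have hH := ((Hdeg_C (coeff v γ)).mul (Hdeg_pow_sub c (v 0 - 1))).mul
      (Hdeg_hbar.pow (v 1))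
    have := hH d hne
    omega

lemma coeff_sh_top {n : ℕ} {γ : P2} (h : Hdeg n γ) (c : ℂ) (m : ℕ) :
    coeff (fd n m) (Tk.sh c γ) = coeff (fd n m) γ := by
  have h2 : coeff (fd n m) (Tk.sh c γ - γ) = 0 := by
    by_contra hne
    have := h.sh_sub c _ hne
    rw [fd_apply0] at this
    omega
  rw [MvPolynomial.coeff_sub, sub_eq_zero] at h2
  exact h2

lemma Hdeg_emb (q : Polynomial ℂ) : Hdeg 0 (emb q) := by
  induction q using Polynomial.induction_on' with
  | add p q hp hq => rw [emb, map_add]; exact hp.add hq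
  | monomial k c =>
    rw [emb, Polynomial.aeval_monomial]
    have := (Hdeg_C c).mul (Hdeg_hbar.pow k)
    simpa [Cc, algebraMap_eq] using this.mono (by omega)

/-- The linear action of `e` on `Ω(λ,a,β)` as an explicit polynomial operator. -/
def Elin (l a : ℂ) (α : Polynomial ℂ) (γ : P2) : P2 :=
  (Cc (l / 2) * hh + emb α) * sh (-2) γ - Cc l * (hbar + Cc a) * pd (sh (-2) γ)

lemma Hdeg.Elin {n : ℕ} {γ : P2} (h : Hdeg n γ) (l a : ℂ) (α : Polynomial ℂ) :
    Hdeg (n + 1) (Tk.Elin l a α γ) := by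
  have hδ : Hdeg n (Tk.sh (-2) γ) := h.sh (-2)
  have h1 : Hdeg 1 (Cc (l / 2) * hh + emb α) :=
    (((Hdeg_C (l / 2)).mul Hdeg_hh).mono (by omega)).add ((Hdeg_emb α).mono (by omega))
  have h2 := h1.mul hδ
  have h3 := ((Hdeg_C l).mul ((Hdeg_hbar.add ((Hdeg_C a))))).mul hδ.pd
  exact (h2.mono (by omega)).sub (h3.mono (by omega))

lemma coeff_Elin_top {n : ℕ} {γ : P2} (h : Hdeg n γ) (l a : ℂ) (α : Polynomial ℂ) (m : ℕ) :
    coeff (fd (n + 1) m) (Tk.Elin l a α γ) = (l / 2) * coeff (fd n m) γ := by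
  classical
  have hδ : Hdeg n (Tk.sh (-2) γ) := h.sh (-2)
  have hsplit : Tk.Elin l a α γ = Cc (l / 2) * (hh * Tk.sh (-2) γ)
      + emb α * Tk.sh (-2) γ - Cc l * (hbar + Cc a) * pd (Tk.sh (-2) γ) := by
    rw [Tk.Elin]; ring
  rw [hsplit, MvPolynomial.coeff_sub, MvPolynomial.coeff_add]
  have e1 : coeff (fd (n + 1) m) (Cc (l / 2) * (hh * Tk.sh (-2) γ))
      = (l / 2) * coeff (fd n m) γ := by
    rw [Cc, coeff_C_mul]
    have hfd : fd (n + 1) m = Finsupp.single (0 : Fin 2) 1 + fd n m := by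
      rw [fd, fd]
      ext i
      fin_cases i <;> simp [Finsupp.single_apply] <;> omega
    rw [hfd, hh, coeff_X_mul, coeff_sh_top h]
  have e2 : coeff (fd (n + 1) m) (emb α * Tk.sh (-2) γ) = 0 := by
    by_contra hne
    have := ((Hdeg_emb α).mul hδ) _ hne
    rw [fd_apply0] at this
    omega
  have e3 : coeff (fd (n + 1) m) (Cc l * (hbar + Cc a) * pd (Tk.sh (-2) γ)) = 0 := by
    by_contra hne
    have := (((Hdeg_C l).mul (Hdeg_hbar.add (Hdeg_C a))).mul hδ.pd) _ hne
    rw [fd_apply0] at this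
    omega
  rw [e1, e2, e3]
  ring

lemma Hdeg.coeff_eq_zero {n k : ℕ} {γ : P2} (h : Hdeg n γ) (hk : n < k) (m : ℕ) :
    coeff (fd k m) γ = 0 := by
  by_contra hne
  have := h _ hne
  rw [fd_apply0] at this
  omega


end Tk

open MvPolynomial in
lemma Tk.no_whittakerE {g : Type} [LieRing g] [LieAlgebra ℂ g] (T : Tk.TakiffData g)
    (l a : ℂ) (hl : l ≠ 0) (α β : Polynomial ℂ)
    [LieRingModule g P2] [LieModule ℂ g P2] (hOm : Tk.OmegaAct T l a α β)
    {L : Type} [AddCommGroup L] [Module ℂ L] [LieRingModule g L] [LieModule ℂ g L]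
    (μ1 : ℂ) (w : P2 ⊗[ℂ] L) (hw : w ≠ 0) (hE : ⁅T.E, w⁆ = μ1 • w) : False := by
  classical
  set bL : Module.Basis (Module.Free.ChooseBasisIndex ℂ L) ℂ L := Module.Free.chooseBasis ℂ L with hbL
  set ι := Module.Free.ChooseBasisIndex ℂ L
  -- coordinate maps
  set π : ι → (P2 ⊗[ℂ] L) →ₗ[ℂ] P2 := fun i =>
    (TensorProduct.rid ℂ P2).toLinearMap ∘ₗ LinearMap.lTensor P2 (bL.coord i) with hπ
  have π_tmul : ∀ (i : ι) (p : P2) (u : L), π i (p ⊗ₜ[ℂ] u) = (bL.repr u i) • p := by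
    intro i p u
    simp [hπ, TensorProduct.rid_tmul, Module.Basis.coord_apply]
  -- representation over the basis
  obtain ⟨s, γ, hrep⟩ : ∃ (s : Finset ι) (γ : ι → P2), w = ∑ i ∈ s, γ i ⊗ₜ[ℂ] bL i := by
    clear hE hw
    induction w using TensorProduct.induction_on with
    | zero => exact ⟨∅, fun _ => 0, by simp⟩
    | tmul p u =>
      refine ⟨(bL.repr u).support, fun i => (bL.repr u) i • p, ?_⟩
      have hu : ∑ i ∈ (bL.repr u).support, (bL.repr u) i • bL i = u := by
        have h2 := bL.linearCombination_repr u
        rwa [Finsupp.linearCombination_apply, Finsupp.sum] at h2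
      calc p ⊗ₜ[ℂ] u = p ⊗ₜ[ℂ] (∑ i ∈ (bL.repr u).support, (bL.repr u) i • bL i) := by
            rw [hu]
        _ = ∑ i ∈ (bL.repr u).support, ((bL.repr u) i • p) ⊗ₜ[ℂ] bL i := by
            rw [TensorProduct.tmul_sum]
            exact Finset.sum_congr rfl fun i _ => (TensorProduct.smul_tmul _ _ _).symm
    | add x y hx hy =>
      obtain ⟨s1, γ1, h1⟩ := hx
      obtain ⟨s2, γ2, h2⟩ := hy
      refine ⟨s1 ∪ s2,
        fun i => (if i ∈ s1 then γ1 i else 0) + (if i ∈ s2 then γ2 i else 0), ?_⟩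
      have key : ∀ (s' : Finset ι) (δ : ι → P2), s' ⊆ s1 ∪ s2 →
          ∑ i ∈ s1 ∪ s2, (if i ∈ s' then δ i else 0 : P2) ⊗ₜ[ℂ] bL i
            = ∑ i ∈ s', δ i ⊗ₜ[ℂ] bL i := by
        intro s' δ hsub
        rw [← Finset.sum_subset hsub (fun x _ hx => by simp [hx])]
        exact Finset.sum_congr rfl fun i hi => by simp [hi]
      rw [h1, h2, ← key s1 γ1 Finset.subset_union_left,
        ← key s2 γ2 Finset.subset_union_right, ← Finset.sum_add_distrib]
      exact Finset.sum_congr rfl fun i _ => (TensorProduct.add_tmul _ _ _).symm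
  have πsum : ∀ (i : ι) (δ : ι → P2), π i (∑ j ∈ s, δ j ⊗ₜ[ℂ] bL j)
      = if i ∈ s then δ i else 0 := by
    intro i δ
    rw [map_sum]
    rw [Finset.sum_congr rfl (fun j _ => by
      rw [π_tmul, bL.repr_self, Finsupp.single_apply, ite_smul, one_smul, zero_smul])]
    exact Finset.sum_ite_eq' s i δ
  -- a nonzero coordinate exists
  have hex : ∃ i ∈ s, γ i ≠ 0 := by
    by_contra hc
    push_neg at hc
    exact hw (by
      rw [hrep]
      exact Finset.sum_eq_zero fun i hi => by rw [hc i hi, TensorProduct.zero_tmul])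
  -- degree bookkeeping
  set s' : Finset ι := s.filter (fun i => γ i ≠ 0) with hs'
  have hs'ne : s'.Nonempty := by
    obtain ⟨i, his, hiγ⟩ := hex
    exact ⟨i, Finset.mem_filter.mpr ⟨his, hiγ⟩⟩
  set f : ι → ℕ := fun j => (γ j).support.sup (fun d => d 0) with hf
  set n := s'.sup f with hn
  obtain ⟨i₀, hi₀, hfi₀⟩ := Finset.exists_mem_eq_sup s' hs'ne f
  have hi₀s : i₀ ∈ s := (Finset.mem_filter.mp hi₀).1
  have hγi₀ : γ i₀ ≠ 0 := (Finset.mem_filter.mp hi₀).2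
  have hHdeg : ∀ j ∈ s, Tk.Hdeg n (γ j) := by
    intro j hj d hd
    have hjs' : j ∈ s' := Finset.mem_filter.mpr ⟨hj, fun h0 => hd (by rw [h0]; simp)⟩
    calc d 0 ≤ f j :=
          Finset.le_sup (f := fun d : Fin 2 →₀ ℕ => d 0) (MvPolynomial.mem_support_iff.mpr hd)
      _ ≤ n := Finset.le_sup hjs'
  have hsupne : (γ i₀).support.Nonempty := by
    exact MvPolynomial.support_nonempty.mpr hγi₀
  obtain ⟨d, hd, hd0⟩ := Finset.exists_mem_eq_sup (γ i₀).support hsupne (fun d => d 0)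
  have hd0n : d 0 = n := by rw [hn, hfi₀]; exact hd0.symm
  have hcne : MvPolynomial.coeff (Tk.fd n (d 1)) (γ i₀) ≠ 0 := by
    rw [← hd0n, ← Tk.eq_fd d]
    exact MvPolynomial.mem_support_iff.mp hd
  set m := d 1
  -- compute the bracket
  have hsum_lie : ⁅T.E, w⁆ = ∑ i ∈ s, ⁅T.E, γ i⁆ ⊗ₜ[ℂ] bL i
      + ∑ i ∈ s, γ i ⊗ₜ[ℂ] ⁅T.E, bL i⁆ := by
    rw [hrep]
    rw [show ⁅T.E, ∑ i ∈ s, γ i ⊗ₜ[ℂ] bL i⁆ = ∑ i ∈ s, ⁅T.E, γ i ⊗ₜ[ℂ] bL i⁆ by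
      rw [← LieModule.toEnd_apply_apply ℂ g (P2 ⊗[ℂ] L), map_sum]
      exact Finset.sum_congr rfl fun i _ => by rw [LieModule.toEnd_apply_apply]]
    rw [← Finset.sum_add_distrib]
    exact Finset.sum_congr rfl fun i _ => TensorProduct.LieModule.lie_tmul_right _ _ _
  -- apply π i₀ to the Whittaker equation
  have heq := congrArg (π i₀) hE
  rw [hsum_lie, map_add, map_smul, πsum i₀ (fun i => ⁅T.E, γ i⁆), if_pos hi₀s, map_sum,
    Finset.sum_congr rfl (fun i (hi : i ∈ s) => π_tmul i₀ (γ i) ⁅T.E, bL i⁆),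
    hrep, πsum i₀ γ, if_pos hi₀s, hOm.1 (γ i₀)] at heq
  -- extract the coefficient of h^(n+1) h̄^m
  have hco := congrArg (MvPolynomial.coeff (Tk.fd (n + 1) m)) heq
  rw [MvPolynomial.coeff_add, MvPolynomial.coeff_smul,
    show (Tk.Cc (l / 2) * Tk.hh + Tk.emb α) * Tk.sh (-2) (γ i₀)
        - Tk.Cc l * (Tk.hbar + Tk.Cc a) * Tk.pd (Tk.sh (-2) (γ i₀))
      = Tk.Elin l a α (γ i₀) from rfl,
    Tk.coeff_Elin_top (hHdeg i₀ hi₀s) l a α m,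
    (hHdeg i₀ hi₀s).coeff_eq_zero (Nat.lt_succ_self n) m, smul_zero] at hco
  have hz1 : MvPolynomial.coeff (Tk.fd (n + 1) m)
      (∑ i ∈ s, (bL.repr ⁅T.E, bL i⁆ i₀) • γ i) = 0 := by
    rw [MvPolynomial.coeff_sum]
    refine Finset.sum_eq_zero fun i hi => ?_
    rw [MvPolynomial.coeff_smul, (hHdeg i hi).coeff_eq_zero (Nat.lt_succ_self n) m,
      smul_zero]
  rw [hz1, add_zero] at hco
  have : MvPolynomial.coeff (Tk.fd n m) (γ i₀) = 0 := by
    rcases mul_eq_zero.mp hco with h | h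
    · exact absurd (by
        have := h
        field_simp at this
        simpa using this) hl
    · exact h
  exact hcne this

theorem stmt14 {g : Type} [LieRing g] [LieAlgebra ℂ g] (T : Tk.TakiffData g)
    (l a η θ : ℂ) (hl : l ≠ 0) (ha : a ≠ 0) (hηθ : (η, θ) ≠ (0, 0)) (α β : Polynomial ℂ)
    [LieRingModule g P2] [LieModule ℂ g P2]
    (hOm : Tk.OmegaAct T l a α β)
    {L : Type} [AddCommGroup L] [Module ℂ L] [LieRingModule g L] [LieModule ℂ g L]
    (hLsimple : IsSimpleOrder (LieSubmodule ℂ g L))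
    (v : L) (hv : Tk.IsHW T η θ v) :
    (∀ (μ1 μ2 : ℂ) (w : P2 ⊗[ℂ] L), w ≠ 0 →
        ¬(⁅T.E, w⁆ = μ1 • w ∧ ⁅T.E', w⁆ = μ2 • w)) ∧
    (∀ (μ1 μ2 : ℂ) (W : Type) [AddCommGroup W] [Module ℂ W] [LieRingModule g W]
        [LieModule ℂ g W] (w : W), ⁅T.E, w⁆ = μ1 • w → ⁅T.E', w⁆ = μ2 • w →
          LieSubmodule.lieSpan ℂ g {w} = ⊤ → Nontrivial W →
            IsEmpty ((P2 ⊗[ℂ] L) ≃ₗ⁅ℂ,g⁆ W)) := by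
  have part1 : ∀ (μ1 μ2 : ℂ) (w : P2 ⊗[ℂ] L), w ≠ 0 →
      ¬(⁅T.E, w⁆ = μ1 • w ∧ ⁅T.E', w⁆ = μ2 • w) := by
    rintro μ1 μ2 w hw ⟨hE, -⟩
    exact Tk.no_whittakerE T l a hl α β hOm μ1 w hw hE
  refine ⟨part1, ?_⟩
  intro μ1 μ2 W _ _ _ _ w hE hE' hspan hnt
  refine ⟨fun φ => ?_⟩
  have hw0 : w ≠ 0 := by
    rintro rfl
    have hbot : (⊤ : LieSubmodule ℂ g W) ≤ ⊥ := by
      rw [← hspan]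
      exact (LieSubmodule.lieSpan_le).mpr (by simp)
    obtain ⟨x, y, hxy⟩ := hnt
    have hx : x = 0 := (LieSubmodule.mem_bot _).mp (hbot (LieSubmodule.mem_top x))
    have hy : y = 0 := (LieSubmodule.mem_bot _).mp (hbot (LieSubmodule.mem_top y))
    exact hxy (hx.trans hy.symm)
  have hφ0 : φ (0 : P2 ⊗[ℂ] L) = 0 := by
    have h0 := map_zero (φ : (P2 ⊗[ℂ] L) →ₗ⁅ℂ,g⁆ W)
    rwa [LieModuleEquiv.coe_toLieModuleHom] at h0
  have hune : φ.symm w ≠ 0 := fun h =>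
    hw0 (by rw [← φ.apply_symm_apply w, h, hφ0])
  have hsmul : ∀ (c : ℂ) (z : W), φ.symm (c • z) = c • φ.symm z := by
    intro c z
    have h2 := map_smul (φ.symm : W →ₗ⁅ℂ,g⁆ (P2 ⊗[ℂ] L)) c z
    rwa [LieModuleEquiv.coe_toLieModuleHom] at h2
  have hEu : ⁅T.E, φ.symm w⁆ = μ1 • φ.symm w := by
    have h1 := LieModuleHom.map_lie (φ.symm : W →ₗ⁅ℂ,g⁆ (P2 ⊗[ℂ] L)) T.E w
    rw [LieModuleEquiv.coe_toLieModuleHom] at h1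
    rw [← h1, hE, hsmul]
  have hE'u : ⁅T.E', φ.symm w⁆ = μ2 • φ.symm w := by
    have h1 := LieModuleHom.map_lie (φ.symm : W →ₗ⁅ℂ,g⁆ (P2 ⊗[ℂ] L)) T.E' w
    rw [LieModuleEquiv.coe_toLieModuleHom] at h1
    rw [← h1, hE', hsmul]
  exact part1 μ1 μ2 (φ.symm w) hune ⟨hEu, hE'u⟩
end
end

section
/- Let λ∈ℂ∖{0} and η∈ℂ, and let 𝔟 be the subalgebra of 𝔤 spanned by {e, ē, h̄}. Then the formulas ē∘g(h̄)=λg(h̄), e∘g(h̄)=−2λ·dg/dh̄, h̄∘g(h̄)=(h̄+η)g(h̄) define a 𝔟-module structure on the polynomial ring ℂ[h̄], and this 𝔟-module is simple (irreducible). -/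
open scoped TensorProduct

noncomputable section

attribute [local instance 100] LieRing.ofAssociativeRing

namespace Stmt19Aux

open Polynomial

noncomputable def A0 (l : ℂ) : Module.End ℂ (Polynomial ℂ) :=
  (-2 * l) • (Polynomial.derivative : Polynomial ℂ →ₗ[ℂ] Polynomial ℂ)

noncomputable def B0 (l : ℂ) : Module.End ℂ (Polynomial ℂ) := l • LinearMap.id

noncomputable def C0 (η : ℂ) : Module.End ℂ (Polynomial ℂ) :=
  LinearMap.mulLeft ℂ (Polynomial.X + Polynomial.C η)

lemma A0_apply (l : ℂ) (p : Polynomial ℂ) :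
    A0 l p = Polynomial.C (-2 * l) * Polynomial.derivative p := by
  simp [A0, Polynomial.smul_eq_C_mul]

lemma B0_apply (l : ℂ) (p : Polynomial ℂ) : B0 l p = Polynomial.C l * p := by
  simp [B0, Polynomial.smul_eq_C_mul]

lemma C0_apply (η : ℂ) (p : Polynomial ℂ) :
    C0 η p = (Polynomial.X + Polynomial.C η) * p := by
  simp [C0]

lemma comm_key (l η : ℂ) (a b c a' b' c' : ℂ) :
    ⁅a • A0 l + b • B0 l + c • C0 η, a' • A0 l + b' • B0 l + c' • C0 η⁆
      = (2 * (c * a' - a * c')) • B0 l := by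
  apply LinearMap.ext
  intro p
  simp only [Ring.lie_def, LinearMap.sub_apply, Module.End.mul_apply, LinearMap.add_apply,
    LinearMap.smul_apply, map_add, map_smul, A0_apply, B0_apply, C0_apply,
    Polynomial.smul_eq_C_mul, Polynomial.derivative_mul, Polynomial.derivative_add,
    Polynomial.derivative_X, Polynomial.derivative_C, map_mul, map_sub, map_neg, map_ofNat]
  ring

variable {g : Type} [LieRing g] [LieAlgebra ℂ g]

/-- The raw linear map `g →ₗ End(ℂ[X])`. -/
noncomputable def rho0 (T : Tk.TakiffData g) (l η : ℂ) : g →ₗ[ℂ] Module.End ℂ (Polynomial ℂ) :=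
  (T.bas.coord 0).smulRight (A0 l) + (T.bas.coord 3).smulRight (B0 l)
    + (T.bas.coord 5).smulRight (C0 η)

lemma rho0_apply (T : Tk.TakiffData g) (l η : ℂ) (x : g) :
    rho0 T l η x = T.bas.repr x 0 • A0 l + T.bas.repr x 3 • B0 l + T.bas.repr x 5 • C0 η := by
  simp [rho0, Module.Basis.coord_apply]

lemma basE (T : Tk.TakiffData g) : T.bas 0 = T.E := by
  rw [show (T.bas : Fin 6 → g) 0 = T.E from by rw [T.hbas]; rfl]

lemma basE' (T : Tk.TakiffData g) : T.bas 3 = T.E' := by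
  rw [show (T.bas : Fin 6 → g) 3 = T.E' from by rw [T.hbas]; rfl]

lemma basH' (T : Tk.TakiffData g) : T.bas 5 = T.H' := by
  rw [show (T.bas : Fin 6 → g) 5 = T.H' from by rw [T.hbas]; rfl]

lemma rho0_comb (T : Tk.TakiffData g) (l η : ℂ) (a b c : ℂ) :
    rho0 T l η (a • T.E + b • T.E' + c • T.H')
      = a • A0 l + b • B0 l + c • C0 η := by
  rw [← basE T, ← basE' T, ← basH' T, rho0_apply]
  simp [Module.Basis.repr_self, Finsupp.single_apply]

lemma lie_comb (T : Tk.TakiffData g) (a b c a' b' c' : ℂ) :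
    ⁅a • T.E + b • T.E' + c • T.H', a' • T.E + b' • T.E' + c' • T.H'⁆
      = (2 * (c * a' - a * c')) • T.E' := by
  have hEH' : ⁅T.E, T.H'⁆ = (-2 : ℂ) • T.E' := by
    rw [← lie_skew, T.rH'E]; rw [neg_smul]
  have hH'E' : ⁅T.H', T.E'⁆ = 0 := by
    rw [← lie_skew, T.rE'H']; simp
  have hE'E : ⁅T.E', T.E⁆ = 0 := by
    rw [← lie_skew, T.rEE']; simp
  simp only [add_lie, lie_add, smul_lie, lie_smul, lie_self, T.rEE', hEH', T.rH'E, T.rE'H',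
    hH'E', hE'E, smul_zero, zero_add, add_zero, smul_smul]
  module

lemma rho0_E (T : Tk.TakiffData g) (l η : ℂ) : rho0 T l η T.E = A0 l := by
  have := rho0_comb T l η 1 0 0; simpa using this

lemma rho0_E' (T : Tk.TakiffData g) (l η : ℂ) : rho0 T l η T.E' = B0 l := by
  have := rho0_comb T l η 0 1 0; simpa using this

lemma rho0_H' (T : Tk.TakiffData g) (l η : ℂ) : rho0 T l η T.H' = C0 η := by
  have := rho0_comb T l η 0 0 1; simpa using this

lemma mem_decomp (T : Tk.TakiffData g) (bsub : LieSubalgebra ℂ g)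
    (hbsub : bsub.toSubmodule = Submodule.span ℂ {T.E, T.E', T.H'}) (x : g) (hx : x ∈ bsub) :
    ∃ a b c : ℂ, x = a • T.E + b • T.E' + c • T.H' := by
  have hx' : x ∈ Submodule.span ℂ ({T.E, T.E', T.H'} : Set g) := by
    rw [← hbsub]; exact hx
  rw [show ({T.E, T.E', T.H'} : Set g) = insert T.E (insert T.E' {T.H'}) from rfl,
    Submodule.mem_span_insert] at hx'
  obtain ⟨a, z, hz, hxz⟩ := hx'
  rw [Submodule.mem_span_insert] at hz
  obtain ⟨b, w, hw, hzw⟩ := hz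
  rw [Submodule.mem_span_singleton] at hw
  obtain ⟨c, hc⟩ := hw
  exact ⟨a, b, c, by rw [hxz, hzw, ← hc]; abel⟩

/-- The Lie algebra homomorphism. -/
noncomputable def rhoLie (T : Tk.TakiffData g) (l η : ℂ) (bsub : LieSubalgebra ℂ g)
    (hbsub : bsub.toSubmodule = Submodule.span ℂ {T.E, T.E', T.H'}) :
    bsub →ₗ⁅ℂ⁆ Module.End ℂ (Polynomial ℂ) where
  toLinearMap := (rho0 T l η).comp bsub.incl.toLinearMap
  map_lie' := by
    intro x y
    obtain ⟨a, b, c, hx⟩ := mem_decomp T bsub hbsub x x.2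
    obtain ⟨a', b', c', hy⟩ := mem_decomp T bsub hbsub y y.2
    have hb : ((⁅x, y⁆ : bsub) : g) = (2 * (c * a' - a * c')) • T.E' := by
      rw [LieSubalgebra.coe_bracket, hx, hy, lie_comb]
    show rho0 T l η ((⁅x, y⁆ : bsub) : g)
      = ⁅rho0 T l η (x : g), rho0 T l η (y : g)⁆
    rw [hb, hx, hy, map_smul, rho0_E', rho0_comb, rho0_comb, comm_key]

lemma rhoLie_apply (T : Tk.TakiffData g) (l η : ℂ) (bsub : LieSubalgebra ℂ g)
    (hbsub : bsub.toSubmodule = Submodule.span ℂ {T.E, T.E', T.H'}) (x : bsub) :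
    rhoLie T l η bsub hbsub x = rho0 T l η (x : g) := rfl

end Stmt19Aux

open Stmt19Aux in
theorem stmt19 {g : Type} [LieRing g] [LieAlgebra ℂ g] (T : Tk.TakiffData g)
    (l η : ℂ) (hl : l ≠ 0)
    (bsub : LieSubalgebra ℂ g)
    (hbsub : bsub.toSubmodule = Submodule.span ℂ {T.E, T.E', T.H'})
    (hEb : T.E ∈ bsub) (hE'b : T.E' ∈ bsub) (hH'b : T.H' ∈ bsub) :
    ∃ ρ : bsub →ₗ⁅ℂ⁆ Module.End ℂ (Polynomial ℂ),
      (∀ p : Polynomial ℂ, ρ ⟨T.E', hE'b⟩ p = Polynomial.C l * p) ∧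
      (∀ p : Polynomial ℂ, ρ ⟨T.E, hEb⟩ p = Polynomial.C (-2 * l) * Polynomial.derivative p) ∧
      (∀ p : Polynomial ℂ, ρ ⟨T.H', hH'b⟩ p = (Polynomial.X + Polynomial.C η) * p) ∧
      (∀ N : Submodule ℂ (Polynomial ℂ),
        (∀ (x : bsub) (p : Polynomial ℂ), p ∈ N → ρ x p ∈ N) → N = ⊥ ∨ N = ⊤) := by
  refine ⟨rhoLie T l η bsub hbsub, ?_, ?_, ?_, ?_⟩
  · intro p
    rw [rhoLie_apply, rho0_E', B0_apply]
  · intro p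
    rw [rhoLie_apply, rho0_E, A0_apply]
  · intro p
    rw [rhoLie_apply, rho0_H', C0_apply]
  · intro N hN
    by_cases hbot : N = ⊥
    · exact Or.inl hbot
    right
    have hD : ∀ p ∈ N, Polynomial.derivative p ∈ N := by
      intro p hp
      have h1 := hN ⟨T.E, hEb⟩ p hp
      rw [rhoLie_apply, rho0_E, A0_apply] at h1
      have h2 := N.smul_mem ((-2 * l)⁻¹) h1
      rwa [← Polynomial.smul_eq_C_mul, smul_smul,
        inv_mul_cancel₀ (by simpa using hl), one_smul] at h2
    have hM : ∀ p ∈ N, (Polynomial.X + Polynomial.C η) * p ∈ N := by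
      intro p hp
      have h1 := hN ⟨T.H', hH'b⟩ p hp
      rwa [rhoLie_apply, rho0_H', C0_apply] at h1
    have hone : (1 : Polynomial ℂ) ∈ N := by
      obtain ⟨p, hpN, hp0⟩ := Submodule.exists_mem_ne_zero_of_ne_bot hbot
      have key : ∀ n : ℕ, ∀ p : Polynomial ℂ, p ∈ N → p ≠ 0 → p.natDegree ≤ n →
          (1 : Polynomial ℂ) ∈ N := by
        intro n
        induction n with
        | zero =>
          intro p hpN hp0 hdeg
          have hc := Polynomial.eq_C_of_natDegree_eq_zero (Nat.le_zero.mp hdeg)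
          have hc0 : p.coeff 0 ≠ 0 := by
            intro h; exact hp0 (by rw [hc, h, map_zero])
          have h1p : (1 : Polynomial ℂ) = (p.coeff 0)⁻¹ • p := by
            nth_rewrite 2 [hc]
            rw [Polynomial.smul_C, smul_eq_mul, inv_mul_cancel₀ hc0, Polynomial.C_1]
          rw [h1p]; exact N.smul_mem _ hpN
        | succ n ih =>
          intro p hpN hp0 hdeg
          by_cases hd0 : p.natDegree = 0
          · have hc := Polynomial.eq_C_of_natDegree_eq_zero hd0
            have hc0 : p.coeff 0 ≠ 0 := by
              intro h; exact hp0 (by rw [hc, h, map_zero])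
            have h1p : (1 : Polynomial ℂ) = (p.coeff 0)⁻¹ • p := by
              nth_rewrite 2 [hc]
              rw [Polynomial.smul_C, smul_eq_mul, inv_mul_cancel₀ hc0, Polynomial.C_1]
            rw [h1p]; exact N.smul_mem _ hpN
          · refine ih (Polynomial.derivative p) (hD p hpN) ?_ ?_
            · intro h
              exact hd0 (Polynomial.natDegree_eq_zero_of_derivative_eq_zero h)
            · have := Polynomial.natDegree_derivative_lt hd0
              omega
      exact key p.natDegree p hpN hp0 le_rfl
    have hpow : ∀ n : ℕ, (Polynomial.X : Polynomial ℂ) ^ n ∈ N := by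
      intro n
      induction n with
      | zero => simpa using hone
      | succ n ih =>
        have h3 := N.sub_mem (hM _ ih) (N.smul_mem η ih)
        have he : (Polynomial.X + Polynomial.C η) * Polynomial.X ^ n
            - η • Polynomial.X ^ n = (Polynomial.X : Polynomial ℂ) ^ (n + 1) := by
          rw [Polynomial.smul_eq_C_mul]; ring
        rwa [he] at h3
    refine (Submodule.eq_top_iff').mpr ?_
    intro p
    induction p using Polynomial.induction_on' with
    | add p q hp hq => exact N.add_mem hp hq
    | monomial n a =>
      rw [← Polynomial.C_mul_X_pow_eq_monomial, ← Polynomial.smul_eq_C_mul]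
      exact N.smul_mem a (hpow n)
end
end
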